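/- Let A, Ā ∈ ℝ^{n×n}, B, B̄ ∈ ℝ^{n×m}, K ∈ ℝ^{m×n}, and let Q ∈ ℝ^{n×n}, R ∈ ℝ^{m×m} be symmetric positive definite. Suppose P ∈ ℝ^{n×n} is symmetric positive definite and satisfies (Ā − B̄K)ᵀP + P(Ā − B̄K) + Q + KᵀRK = 0, and suppose ‖P·((Ā − A) − (B̄ − B)K)‖ ≤ λ_min(Q)/4. Then A − BK is Hurwitz. -/

import Mathlib

open Matrix

/-- A square real matrix is Hurwitz if every eigenvalue of it, viewed as a complex
matrix, has negative real part. -/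
def IsHurwitz {n : ℕ} (A : Matrix (Fin n) (Fin n) ℝ) : Prop :=
  ∀ μ ∈ spectrum ℂ (A.map (Complex.ofReal)), μ.re < 0

/-- The spectral (ℓ² operator) norm of a real matrix. -/
noncomputable def matSpectralNorm {m n : ℕ} (A : Matrix (Fin m) (Fin n) ℝ) : ℝ :=
  ‖LinearMap.toContinuousLinearMap (Matrix.toEuclideanLin A)‖

/-- The smallest eigenvalue of a symmetric real matrix. -/
noncomputable def lamMin {n : ℕ} {A : Matrix (Fin n) (Fin n) ℝ}
    (hA : A.IsHermitian) : ℝ :=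
  ⨅ i, hA.eigenvalues i

lemma dot_tr {R : Type*} [CommRing R] {k l : ℕ} (A : Matrix (Fin k) (Fin l) R)
    (x : Fin l → R) (w : Fin k → R) : x ⬝ᵥ (Aᵀ *ᵥ w) = (A *ᵥ x) ⬝ᵥ w := by
  rw [mulVec_transpose, dotProduct_comm, ← dotProduct_mulVec, dotProduct_comm]

lemma star_real_matrix {k : ℕ} (A : Matrix (Fin k) (Fin k) ℝ) : star A = Aᵀ := by
  ext i j; simp [Matrix.star_apply]

lemma rayleigh_lower {k : ℕ} {Q : Matrix (Fin k) (Fin k) ℝ} (hQ : Q.IsHermitian)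
    (x : Fin k → ℝ) : lamMin hQ * (x ⬝ᵥ x) ≤ x ⬝ᵥ (Q *ᵥ x) := by
  classical
  set U : Matrix (Fin k) (Fin k) ℝ := (hQ.eigenvectorUnitary : Matrix (Fin k) (Fin k) ℝ) with hU
  have hunit : U * star U = 1 := (Matrix.mem_unitaryGroup_iff).mp hQ.eigenvectorUnitary.2
  set u : Fin k → ℝ := Uᵀ *ᵥ x with hu
  have hdot : ∀ w : Fin k → ℝ, x ⬝ᵥ (U *ᵥ w) = u ⬝ᵥ w := by
    intro w
    have := dot_tr (R := ℝ) Uᵀ x w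
    simpa [Matrix.transpose_transpose] using this
  have h2 : x ⬝ᵥ x = u ⬝ᵥ u := by
    have : u ⬝ᵥ (Uᵀ *ᵥ x) = (U *ᵥ u) ⬝ᵥ x := dot_tr U u x
    have hUu : U *ᵥ u = x := by
      rw [hu, Matrix.mulVec_mulVec]
      rw [star_real_matrix] at hunit
      rw [hunit, Matrix.one_mulVec]
    rw [hu] at this ⊢
    rw [this, hUu]
  have h1 : x ⬝ᵥ (Q *ᵥ x) = ∑ i, hQ.eigenvalues i * (u i * u i) := by
    conv_lhs => rw [hQ.spectral_theorem]
    rw [Unitary.conjStarAlgAut_apply]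
    rw [star_real_matrix, ← hU]
    rw [← Matrix.mulVec_mulVec, ← Matrix.mulVec_mulVec, hdot]
    simp [dotProduct, Matrix.mulVec_diagonal, hu]
    exact Finset.sum_congr rfl fun i _ => by ring
  rw [h1, h2, dotProduct, Finset.mul_sum]
  apply Finset.sum_le_sum
  intro i _
  exact mul_le_mul_of_nonneg_right (ciInf_le (Set.Finite.bddBelow (Set.finite_range _)) i)
    (mul_self_nonneg _)

lemma abs_dot_le_spectralNorm {k : ℕ} (N : Matrix (Fin k) (Fin k) ℝ) (x : Fin k → ℝ) :
    |x ⬝ᵥ (N *ᵥ x)| ≤ matSpectralNorm N * (x ⬝ᵥ x) := by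
  set L := LinearMap.toContinuousLinearMap (Matrix.toEuclideanLin N)
  set x' : EuclideanSpace ℝ (Fin k) := (WithLp.equiv 2 _).symm x with hx'
  have hdot : x ⬝ᵥ (N *ᵥ x) = inner ℝ x' (L x') := by
    simp [PiLp.inner_apply, dotProduct, L, Matrix.toEuclideanLin_apply, x', mulVec]
    exact Finset.sum_congr rfl fun i _ => mul_comm _ _
  have hxx : x ⬝ᵥ x = ‖x'‖ * ‖x'‖ := by
    rw [← real_inner_self_eq_norm_mul_norm]
    simp [PiLp.inner_apply, dotProduct, x', -real_inner_self_eq_norm_sq]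
    rw [EuclideanSpace.norm_sq_eq]
    exact Finset.sum_congr rfl fun i _ => by simp [sq]
  rw [hdot, hxx]
  calc |inner ℝ x' (L x')| ≤ ‖x'‖ * ‖L x'‖ := abs_real_inner_le_norm _ _
    _ ≤ ‖x'‖ * (‖L‖ * ‖x'‖) := by
        exact mul_le_mul_of_nonneg_left (L.le_opNorm x') (norm_nonneg _)
    _ = matSpectralNorm N * (‖x'‖ * ‖x'‖) := by rw [matSpectralNorm]; ring

lemma re_quad {k : ℕ} (S : Matrix (Fin k) (Fin k) ℝ) (v : Fin k → ℂ) :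
    (star v ⬝ᵥ ((S.map Complex.ofReal) *ᵥ v)).re
      = (fun i => (v i).re) ⬝ᵥ (S *ᵥ fun i => (v i).re)
        + (fun i => (v i).im) ⬝ᵥ (S *ᵥ fun i => (v i).im) := by
  simp only [dotProduct, mulVec, Matrix.map_apply, Pi.star_apply]
  rw [Complex.re_sum, ← Finset.sum_add_distrib]
  refine Finset.sum_congr rfl fun i _ => ?_
  have hre : (∑ j, (S i j : ℂ) * v j).re = ∑ j, S i j * (v j).re := by
    rw [Complex.re_sum]
    exact Finset.sum_congr rfl fun j _ => by simp
  have him : (∑ j, (S i j : ℂ) * v j).im = ∑ j, S i j * (v j).im := by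
    rw [Complex.im_sum]
    exact Finset.sum_congr rfl fun j _ => by simp
  rw [Complex.mul_re, hre, him]
  simp [Finset.mul_sum]

lemma mulVec_star_comm {k : ℕ} (M : Matrix (Fin k) (Fin k) ℝ) (v : Fin k → ℂ) :
    (M.map Complex.ofReal) *ᵥ (star v) = star ((M.map Complex.ofReal) *ᵥ v) := by
  ext i
  simp [mulVec, dotProduct, Matrix.map_apply, Complex.conj_ofReal]

/-- Robust stabilization: if `P ≻ 0` solves the nominal Lyapunov
equation `(Ā−B̄K)ᵀP + P(Ā−B̄K) + Q + KᵀRK = 0` with `Q, R ≻ 0`, and the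
perturbation satisfies `‖P·((Ā−A) − (B̄−B)K)‖ ≤ λ_min(Q)/4`, then `A − BK` is
Hurwitz. -/
theorem robust_hurwitz_of_small_perturbation {n m : ℕ}
    (A Abar : Matrix (Fin n) (Fin n) ℝ) (B Bbar : Matrix (Fin n) (Fin m) ℝ)
    (K : Matrix (Fin m) (Fin n) ℝ)
    (Q : Matrix (Fin n) (Fin n) ℝ) (R : Matrix (Fin m) (Fin m) ℝ)
    (hQ : Q.PosDef) (hR : R.PosDef)
    (P : Matrix (Fin n) (Fin n) ℝ) (hP : P.PosDef)
    (hLyap : (Abar - Bbar * K)ᵀ * P + P * (Abar - Bbar * K) + Q + Kᵀ * R * K = 0)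
    (hpert : matSpectralNorm (P * ((Abar - A) - (Bbar - B) * K)) ≤ lamMin hQ.1 / 4) :
    IsHurwitz (A - B * K) := by
  classical
  intro μ hμ
  set M : Matrix (Fin n) (Fin n) ℝ := A - B * K with hM
  set Δ : Matrix (Fin n) (Fin n) ℝ := (Abar - A) - (Bbar - B) * K with hΔ
  set N : Matrix (Fin n) (Fin n) ℝ := P * Δ with hN
  set S : Matrix (Fin n) (Fin n) ℝ := Mᵀ * P + P * M with hS
  set lm : ℝ := lamMin hQ.1 with hlm
  -- extract eigenvector
  rw [spectrum.mem_iff] at hμ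
  have hdet : (algebraMap ℂ (Matrix (Fin n) (Fin n) ℂ) μ - M.map Complex.ofReal).det = 0 := by
    by_contra hne
    exact hμ ((Matrix.isUnit_iff_isUnit_det _).mpr (isUnit_iff_ne_zero.mpr hne))
  obtain ⟨v, hv0, hv⟩ := (Matrix.exists_mulVec_eq_zero_iff).mpr hdet
  have hev : (M.map Complex.ofReal) *ᵥ v = μ • v := by
    have h1 : (algebraMap ℂ (Matrix (Fin n) (Fin n) ℂ) μ) = μ • 1 :=
      Algebra.algebraMap_eq_smul_one μ
    rw [h1, Matrix.sub_mulVec, Matrix.smul_mulVec, Matrix.one_mulVec] at hv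
    exact (sub_eq_zero.mp hv).symm
  set x : Fin n → ℝ := fun i => (v i).re with hx
  set y : Fin n → ℝ := fun i => (v i).im with hy
  -- the complex eigen-identity
  have hSc : S.map Complex.ofReal
      = (M.map Complex.ofReal)ᵀ * P.map Complex.ofReal
        + (P.map Complex.ofReal) * (M.map Complex.ofReal) := by
    ext i j
    simp [Matrix.map_apply, Matrix.mul_apply, Matrix.add_apply, Matrix.transpose_apply, hS]
    try push_cast
    try rw [Finset.sum_add_distrib]
  have hqid : star v ⬝ᵥ ((S.map Complex.ofReal) *ᵥ v)
      = (μ + (starRingEnd ℂ) μ) * (star v ⬝ᵥ ((P.map Complex.ofReal) *ᵥ v)) := by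
    rw [hSc, Matrix.add_mulVec, dotProduct_add, ← Matrix.mulVec_mulVec, ← Matrix.mulVec_mulVec]
    have t1 : star v ⬝ᵥ ((M.map Complex.ofReal)ᵀ *ᵥ ((P.map Complex.ofReal) *ᵥ v))
        = (starRingEnd ℂ) μ * (star v ⬝ᵥ ((P.map Complex.ofReal) *ᵥ v)) := by
      rw [dot_tr, mulVec_star_comm, hev, star_smul, smul_dotProduct]
      simp
    have t2 : star v ⬝ᵥ ((P.map Complex.ofReal) *ᵥ ((M.map Complex.ofReal) *ᵥ v))
        = μ * (star v ⬝ᵥ ((P.map Complex.ofReal) *ᵥ v)) := by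
      rw [hev, Matrix.mulVec_smul, dotProduct_smul]
      simp
    rw [t1, t2]; ring
  -- take real parts
  have hre : 2 * μ.re * (x ⬝ᵥ (P *ᵥ x) + y ⬝ᵥ (P *ᵥ y))
      = x ⬝ᵥ (S *ᵥ x) + y ⬝ᵥ (S *ᵥ y) := by
    have h1 := re_quad S v
    have h2 := re_quad P v
    rw [hqid] at h1
    rw [Complex.add_conj] at h1
    rw [Complex.re_ofReal_mul] at h1
    rw [← h1, ← h2]
  -- Lyapunov identity for the perturbed matrix
  have hE : (Abar - Bbar * K)ᵀ * P + P * (Abar - Bbar * K) = -(Q + Kᵀ * R * K) := by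
    apply eq_neg_of_add_eq_zero_left
    rw [← hLyap]; noncomm_ring
  have key : S = -(Q + Kᵀ * R * K) - (Δᵀ * P + P * Δ) := by
    rw [← hE, hS, hM, hΔ]
    simp only [Matrix.transpose_sub, Matrix.transpose_mul, Matrix.sub_mul, Matrix.mul_sub]
    abel
  have hPt : Pᵀ = P := by
    have h : Pᴴ = P := hP.1
    rwa [← Matrix.star_eq_conjTranspose, star_real_matrix] at h
  -- real quadratic-form estimate
  have quad : ∀ z : Fin n → ℝ, z ⬝ᵥ (S *ᵥ z) ≤ -(lm / 2) * (z ⬝ᵥ z) := by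
    intro z
    have hzz : (0:ℝ) ≤ z ⬝ᵥ z := Finset.sum_nonneg fun i _ => mul_self_nonneg _
    have hK' : z ⬝ᵥ ((Kᵀ * R * K) *ᵥ z) = (K *ᵥ z) ⬝ᵥ (R *ᵥ (K *ᵥ z)) := by
      rw [Matrix.mul_assoc, ← Matrix.mulVec_mulVec, dot_tr, ← Matrix.mulVec_mulVec]
    have hΔP : z ⬝ᵥ ((Δᵀ * P) *ᵥ z) = z ⬝ᵥ (N *ᵥ z) := by
      have h1 : Δᵀ * P = Nᵀ := by rw [hN, Matrix.transpose_mul, hPt]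
      rw [h1, dot_tr, dotProduct_comm]
    have e1 : z ⬝ᵥ (S *ᵥ z)
        = -(z ⬝ᵥ (Q *ᵥ z)) - ((K *ᵥ z) ⬝ᵥ (R *ᵥ (K *ᵥ z))) - 2 * (z ⬝ᵥ (N *ᵥ z)) := by
      rw [key]
      simp only [Matrix.sub_mulVec, Matrix.neg_mulVec, Matrix.add_mulVec, dotProduct_sub,
        dotProduct_neg, dotProduct_add]
      rw [hK', hΔP]
      ring
    have hQz : lm * (z ⬝ᵥ z) ≤ z ⬝ᵥ (Q *ᵥ z) := rayleigh_lower hQ.1 z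
    have hRz : (0:ℝ) ≤ (K *ᵥ z) ⬝ᵥ (R *ᵥ (K *ᵥ z)) := by
      have := hR.posSemidef.re_dotProduct_nonneg (K *ᵥ z)
      simpa using this
    have hNz : |z ⬝ᵥ (N *ᵥ z)| ≤ matSpectralNorm N * (z ⬝ᵥ z) := abs_dot_le_spectralNorm N z
    have hNz2 : -(lm / 4 * (z ⬝ᵥ z)) ≤ z ⬝ᵥ (N *ᵥ z) := by
      have h1 : matSpectralNorm N * (z ⬝ᵥ z) ≤ lm / 4 * (z ⬝ᵥ z) :=
        mul_le_mul_of_nonneg_right hpert hzz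
      have h2 := neg_abs_le (z ⬝ᵥ (N *ᵥ z))
      linarith
    rw [e1]; linarith
  -- positivity facts
  obtain ⟨i₀, hi₀⟩ : ∃ i, v i ≠ 0 := Function.ne_iff.mp hv0
  have hne : Nonempty (Fin n) := ⟨i₀⟩
  have hlmpos : 0 < lm := by
    obtain ⟨j, hj⟩ := Finite.exists_min hQ.1.eigenvalues
    have : lm = hQ.1.eigenvalues j :=
      le_antisymm (ciInf_le (Set.Finite.bddBelow (Set.finite_range _)) j) (le_ciInf hj)
    rw [this]
    exact hQ.eigenvalues_pos j
  have hxy : x i₀ ≠ 0 ∨ y i₀ ≠ 0 := by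
    by_contra h
    push_neg at h
    exact hi₀ (Complex.ext h.1 h.2)
  have hsum_le : ∀ z : Fin n → ℝ, z i₀ * z i₀ ≤ z ⬝ᵥ z := fun z =>
    Finset.single_le_sum (fun i _ => mul_self_nonneg (z i)) (Finset.mem_univ i₀)
  have hs : 0 < x ⬝ᵥ x + y ⬝ᵥ y := by
    have h1 := hsum_le x
    have h2 := hsum_le y
    rcases hxy with h | h
    · nlinarith [mul_self_nonneg (y i₀), mul_self_pos.mpr h]
    · nlinarith [mul_self_nonneg (x i₀), mul_self_pos.mpr h]
  have hPsd : ∀ z : Fin n → ℝ, 0 ≤ z ⬝ᵥ (P *ᵥ z) := by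
    intro z
    have := hP.posSemidef.re_dotProduct_nonneg z
    simpa using this
  have hp : 0 < x ⬝ᵥ (P *ᵥ x) + y ⬝ᵥ (P *ᵥ y) := by
    rcases hxy with h | h
    · have hx0 : x ≠ 0 := fun hc => h (by rw [hc]; rfl)
      have := hP.re_dotProduct_pos hx0
      have h1 : 0 < x ⬝ᵥ (P *ᵥ x) := by simpa using this
      have h2 := hPsd y
      linarith
    · have hy0 : y ≠ 0 := fun hc => h (by rw [hc]; rfl)
      have := hP.re_dotProduct_pos hy0
      have h1 : 0 < y ⬝ᵥ (P *ᵥ y) := by simpa using this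
      have h2 := hPsd x
      linarith
  -- conclude
  have hxS := quad x
  have hyS := quad y
  nlinarith [hre, mul_pos hlmpos hs]
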